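/- Let E ⊆ D be division rings with |E| > 2, and let m, n, k, r be integers with m ≥ k > r ≥ 1 and n > r. Let A ∈ M_{k,r}(E^{m×n}), let X ∈ D^{m×m} and Y ∈ D^{m×n} with rank of the m×(m+n) block matrix (X, Y) equal to m, and suppose that for every B ∈ M_{k,r+1}(E^{m×n}) with rank(B − A) = 1, the 2m×(m+n) block matrix with rows (X, Y) and (I_m, B) has rank m + 1. Then X is invertible and Y = XA. -/

import Mathlib

open Matrix

/-- Rank of a matrix over a division ring: dimension of the left row space. -/
noncomputable def mrank' {D : Type} [DivisionRing D] {ι κ : Type} (A : Matrix ι κ D) : ℕ :=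
  Module.finrank D (Submodule.span D (Set.range fun i : ι => fun j : κ => A i j))

/-- Membership in `M_{k,r}(E^{m×n})`: all entries lie in the division subring `E`, the rank is
`r`, and there are exactly `k` nonzero rows. -/
def MemMkr {D : Type} [DivisionRing D] (E : Subring D) {m n : ℕ} (k r : ℕ)
    (A : Matrix (Fin m) (Fin n) D) : Prop :=
  (∀ i j, A i j ∈ E) ∧ mrank' A = r ∧ {i | ∃ j, A i j ≠ 0}.ncard = k

/-!
Write `Z = Y - XA`. Row reduction of the stacked matrix gives
`rank [[X, Y], [I, B]] = m + rank (Y - XB)`, so the hypothesis says that `Z - (Xu) vᵀ` has rank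
one for every perturbation `B = A + u vᵀ` in `M_{k,r+1}`. Such perturbations exist because the
`k > r` nonzero rows of `A` are linearly dependent, and `v` may be any vector over `E` outside
the row space of `A`. Two such perturbations, with `v` and with `s v` for some `s ∈ E` other
than `0, 1`, force `rank Z ≤ 1`, say `Z = α βᵀ`. If `Z ≠ 0`, choosing `v` also outside the line
of `β` shows that `X` maps every vector supported on the nonzero rows of `A` into the line
`α D`; then `(X, Y)` has rank at most `m - k + 1 < m`. Hence `Y = XA`, and `rank (X, XA) = m`
makes `X` invertible.
-/

open Module Submodule

section

variable {D : Type} [DivisionRing D] {ι κ ν : Type}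

section Rank

lemma mrank'_eq_finrank_range [Fintype ι] (M : Matrix ι κ D) :
    mrank' M = finrank D (LinearMap.range M.vecMulLinear) := by
  rw [range_vecMulLinear]; rfl

lemma mrank'_add_finrank_ker [Fintype ι] [Fintype κ] (M : Matrix ι κ D) :
    mrank' M + finrank D (LinearMap.ker M.vecMulLinear) = Fintype.card ι := by
  rw [mrank'_eq_finrank_range, LinearMap.finrank_range_add_finrank_ker,
    finrank_fintype_fun_eq_card]

lemma mrank'_le_card [Fintype ι] [Fintype κ] (M : Matrix ι κ D) :
    mrank' M ≤ Fintype.card ι :=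
  Nat.le.intro (mrank'_add_finrank_ker M)

lemma mrank'_le_finrank_of_forall_mem [Finite κ] {M : Matrix ι κ D} {N : Submodule D (κ → D)}
    (h : ∀ i, M i ∈ N) : mrank' M ≤ finrank D N :=
  finrank_mono (span_le.mpr (Set.range_subset_iff.mpr h))

lemma row_mem_span_range (M : Matrix ι κ D) (i : ι) : M i ∈ span D (Set.range M) :=
  subset_span ⟨i, rfl⟩

lemma range_vecMulLinear_mul [Fintype ι] [Fintype κ] (M : Matrix ι κ D) (N : Matrix κ ν D) :
    LinearMap.range (M * N).vecMulLinear =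
      (LinearMap.range M.vecMulLinear).map N.vecMulLinear := by
  rw [← LinearMap.range_comp]
  congr 1
  ext x : 1
  simp

lemma mrank'_mul_le_left [Fintype ι] [Fintype κ] [Fintype ν] (M : Matrix ι κ D)
    (N : Matrix κ ν D) : mrank' (M * N) ≤ mrank' M := by
  rw [mrank'_eq_finrank_range, mrank'_eq_finrank_range, range_vecMulLinear_mul]
  exact finrank_map_le _ _

lemma mrank'_mul_le_right [Fintype ι] [Fintype κ] [Fintype ν] (M : Matrix ι κ D)
    (N : Matrix κ ν D) : mrank' (M * N) ≤ mrank' N := by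
  rw [mrank'_eq_finrank_range, mrank'_eq_finrank_range, range_vecMulLinear_mul]
  exact finrank_mono LinearMap.map_le_range

lemma mrank'_add_le [Fintype ι] [Fintype κ] (M N : Matrix ι κ D) :
    mrank' (M + N) ≤ mrank' M + mrank' N := by
  simp only [mrank'_eq_finrank_range]
  refine (finrank_mono ?_).trans (finrank_add_le_finrank_add_finrank _ _)
  rintro _ ⟨x, rfl⟩
  rw [vecMulLinear_apply, vecMul_add]
  exact add_mem_sup (LinearMap.mem_range_self _ x) (LinearMap.mem_range_self _ x)

lemma mrank'_le_card_of_forall_notMem_eq_zero [Fintype κ] {M : Matrix ι κ D} (T : Finset ι)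
    (hT : ∀ i ∉ T, M i = 0) : mrank' M ≤ T.card := by
  classical
  calc mrank' M ≤ (T.image M).card := by
        refine mrank'_le_finrank_of_forall_mem (fun i => ?_) |>.trans
          (finrank_span_finset_le_card _)
        by_cases hi : i ∈ T
        · exact subset_span (Finset.mem_coe.mpr (Finset.mem_image_of_mem M hi))
        · simp [hT i hi]
    _ ≤ T.card := Finset.card_image_le

lemma finrank_span_singleton_le_one {V : Type} [AddCommGroup V] [Module D V] (v : V) :
    finrank D (span D {v}) ≤ 1 := by
  simpa using finrank_span_le_card ({v} : Set V)

lemma range_vecMulLinear_vecMulVec_le [Fintype ι] (u : ι → D) (v : κ → D) :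
    LinearMap.range (vecMulVec u v).vecMulLinear ≤ span D {v} := by
  rintro _ ⟨x, rfl⟩
  simpa [vecMul_vecMulVec] using smul_mem _ (x ⬝ᵥ u) (mem_span_singleton_self v)

lemma mrank'_vecMulVec_le_one [Fintype ι] [Fintype κ] (u : ι → D) (v : κ → D) :
    mrank' (vecMulVec u v) ≤ 1 := by
  rw [mrank'_eq_finrank_range]
  exact (finrank_mono (range_vecMulLinear_vecMulVec_le u v)).trans
    (finrank_span_singleton_le_one v)

lemma mrank'_vecMulVec [Fintype ι] [Fintype κ] {u : ι → D} {v : κ → D} (hu : u ≠ 0)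
    (hv : v ≠ 0) : mrank' (vecMulVec u v) = 1 := by
  classical
  obtain ⟨i, hi⟩ : ∃ i, u i ≠ 0 := Function.ne_iff.mp hu
  have hv_mem : v ∈ LinearMap.range (vecMulVec u v).vecMulLinear :=
    ⟨Pi.single i (u i)⁻¹, by simp [vecMul_vecMulVec, inv_mul_cancel₀ hi]⟩
  rw [mrank'_eq_finrank_range, le_antisymm (range_vecMulLinear_vecMulVec_le u v)
    ((span_singleton_le_iff_mem _ _).mpr hv_mem), finrank_span_singleton hv]

lemma isUnit_of_mrank'_eq_card [Fintype ι] [DecidableEq ι] {X : Matrix ι ι D}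
    (h : mrank' X = Fintype.card ι) : IsUnit X := by
  have hsurj : Function.Surjective X.vecMulLinear := by
    rw [← LinearMap.range_eq_top]
    exact eq_top_of_finrank_eq
      (by rw [← mrank'_eq_finrank_range, h, finrank_fintype_fun_eq_card])
  obtain ⟨Y, hY⟩ := vecMul_surjective_iff_exists_left_inverse.mp hsurj
  exact isUnit_iff_exists_inv'.mpr ⟨Y, hY⟩

lemma ker_vecMulLinear_fromRows_fromCols_one [Fintype ι] [DecidableEq ι] (X : Matrix ι ι D)
    (Y B : Matrix ι κ D) :
    LinearMap.ker (fromRows (fromCols X Y) (fromCols 1 B)).vecMulLinear =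
      (LinearMap.ker (Y - X * B).vecMulLinear).map (fromCols 1 (-X)).vecMulLinear := by
  ext x
  simp only [LinearMap.mem_ker, vecMulLinear_apply, mem_map, vecMul_fromRows, vecMul_fromCols,
    vecMul_one, vecMul_neg, vecMul_sub, ← vecMul_vecMul]
  constructor
  · intro hx
    have hx₂ : x ∘ Sum.inr = -(x ∘ Sum.inl ᵥ* X) := by
      funext i
      simpa [eq_neg_iff_add_eq_zero, add_comm] using congrFun hx (Sum.inl i)
    refine ⟨x ∘ Sum.inl, ?_, by rw [← hx₂, Sum.elim_comp_inl_inr]⟩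
    funext i
    simpa [hx₂, sub_eq_add_neg, neg_vecMul] using congrFun hx (Sum.inr i)
  · rintro ⟨y, hy, rfl⟩
    ext (i | i)
    · simp
    · simpa [sub_eq_add_neg, neg_vecMul] using congrFun hy i

lemma mrank'_fromRows_fromCols_one [Fintype ι] [Fintype κ] [DecidableEq ι] (X : Matrix ι ι D)
    (Y B : Matrix ι κ D) :
    mrank' (fromRows (fromCols X Y) (fromCols 1 B)) = Fintype.card ι + mrank' (Y - X * B) := by
  have hinj : Function.Injective (fromCols (1 : Matrix ι ι D) (-X)).vecMulLinear :=
    fun x y h => by simpa using congrArg (· ∘ Sum.inl) h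
  have hker := congrArg (fun p : Submodule D _ => finrank D p)
    (ker_vecMulLinear_fromRows_fromCols_one X Y B)
  rw [← LinearEquiv.finrank_eq (equivMapOfInjective _ hinj _)] at hker
  have h₁ := mrank'_add_finrank_ker (fromRows (fromCols X Y) (fromCols 1 B))
  have h₂ := mrank'_add_finrank_ker (Y - X * B)
  rw [Fintype.card_sum] at h₁
  omega

end Rank

section RankOne

lemma exists_vecMulVec_eq_of_mrank'_le_one [Finite κ] {M : Matrix ι κ D} (h : mrank' M ≤ 1) :
    ∃ (α : ι → D) (β : κ → D), M = vecMulVec α β := by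
  obtain ⟨g, hg⟩ := finrank_le_one_iff.mp h
  choose α hα using fun i => hg ⟨M i, row_mem_span_range M i⟩
  exact ⟨α, g, Matrix.ext fun i j => (congrFun (congrArg Subtype.val (hα i)) j).symm⟩

lemma eq_span_singleton_of_finrank_le_one {V : Type} [AddCommGroup V] [Module D V]
    [FiniteDimensional D V] {L : Submodule D V} (hL : finrank D L ≤ 1) {x : V} (hx : x ∈ L)
    (hx0 : x ≠ 0) : L = span D {x} :=
  (eq_of_le_of_finrank_le ((span_singleton_le_iff_mem _ _).mpr hx)
    (by rwa [finrank_span_singleton hx0])).symm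

lemma inf_eq_bot_of_finrank_le_one {V : Type} [AddCommGroup V] [Module D V]
    [FiniteDimensional D V] {L L' : Submodule D V} (hL : finrank D L ≤ 1)
    (hL' : finrank D L' ≤ 1) {v : V} (hv : v ∈ L ⊔ L') (hvL : v ∉ L) : L ⊓ L' = ⊥ := by
  refine eq_bot_iff.mpr fun x hx => (mem_bot D).mpr (not_not.mp fun hx0 => hvL ?_)
  rw [eq_span_singleton_of_finrank_le_one hL' hx.2 hx0,
    ← eq_span_singleton_of_finrank_le_one hL hx.1 hx0, sup_idem] at hv
  exact hv

lemma eq_smul_of_sub_smul_mem_of_inf_eq_bot {V : Type} [AddCommGroup V] [Module D V]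
    {L L' : Submodule D V} (hLL' : L ⊓ L' = ⊥) {z l l' : V} {a s : D} (hl : l ∈ L)
    (hl' : l' ∈ L') (h : z - a • (l + l') ∈ L) (h' : z - a • s • (l + l') ∈ L') :
    z = a • (s • l + l') := by
  have hL : z - a • (s • l + l') = z - a • (l + l') + (a * (1 - s)) • l := by
    simp only [smul_add, smul_smul, mul_sub, mul_one, sub_smul]; abel
  have hL' : z - a • (s • l + l') = z - a • s • (l + l') + (a * (s - 1)) • l' := by
    simp only [smul_add, smul_smul, mul_sub, mul_one, sub_smul]; abel
  have hmem : z - a • (s • l + l') ∈ L ⊓ L' :=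
    ⟨hL ▸ add_mem h (smul_mem _ _ hl), hL' ▸ add_mem h' (smul_mem _ _ hl')⟩
  rwa [hLL', mem_bot, sub_eq_zero] at hmem

lemma vecMulVec_apply_eq_smul (w : ι → D) (v : κ → D) (i : ι) :
    vecMulVec w v i = w i • v :=
  rfl

lemma sub_smul_mem_span_range_sub_vecMulVec (M : Matrix ι κ D) (w : ι → D) (v : κ → D)
    (i : ι) : M i - w i • v ∈ span D (Set.range (M - vecMulVec w v)) :=
  row_mem_span_range (M - vecMulVec w v) i

lemma mrank'_le_one_of_mrank'_sub_vecMulVec_le_one [Fintype κ] {Z : Matrix ι κ D} {w : ι → D}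
    {v : κ → D} {s : D} (hs : s ≠ 1) (h₁ : mrank' (Z - vecMulVec w v) ≤ 1)
    (h₂ : mrank' (Z - vecMulVec w (s • v)) ≤ 1) : mrank' Z ≤ 1 := by
  set L := span D (Set.range (Z - vecMulVec w v))
  set L' := span D (Set.range (Z - vecMulVec w (s • v)))
  have hrow₁ := sub_smul_mem_span_range_sub_vecMulVec Z w v
  have hrow₂ := sub_smul_mem_span_range_sub_vecMulVec Z w (s • v)
  by_cases hv : v ∈ L ⊔ L' ∧ v ∉ L
  · obtain ⟨l, hl, l', hl', rfl⟩ := mem_sup.mp hv.1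
    have hLL' := inf_eq_bot_of_finrank_le_one h₁ h₂ hv.1 hv.2
    refine (mrank'_le_finrank_of_forall_mem (N := span D {s • l + l'}) fun i => ?_).trans
      (finrank_span_singleton_le_one _)
    rw [eq_smul_of_sub_smul_mem_of_inf_eq_bot hLL' hl hl' (hrow₁ i) (hrow₂ i)]
    exact smul_mem _ _ (mem_span_singleton_self _)
  · refine (mrank'_le_finrank_of_forall_mem (N := L) fun i => ?_).trans h₁
    suffices w i • v ∈ L by simpa using add_mem (hrow₁ i) this
    by_cases hvL : v ∈ L
    · exact smul_mem _ _ hvL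
    have hdiff : (w i * (s - 1)) • v ∈ L ⊔ L' := by
      convert sub_mem (mem_sup_left (hrow₁ i)) (mem_sup_right (hrow₂ i)) using 1
      simp only [smul_smul, mul_sub, mul_one, sub_smul]; abel
    have hwi : w i = 0 := by
      by_contra hwi
      exact hv ⟨(smul_mem_iff _ (mul_ne_zero hwi (sub_ne_zero.mpr hs))).mp hdiff, hvL⟩
    simp [hwi]

lemma exists_forall_eq_mul_of_mrank'_vecMulVec_sub_le_one [Fintype κ] {α w : ι → D}
    {β v : κ → D} (hα : α ≠ 0) (hβ : β ≠ 0) (hv : v ∉ span D {β})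
    (h : mrank' (vecMulVec α β - vecMulVec w v) ≤ 1) : ∃ d, ∀ i, w i = α i * d := by
  set L := span D (Set.range (vecMulVec α β - vecMulVec w v))
  have hrow (i : ι) : α i • β - w i • v ∈ L := by
    simpa only [vecMulVec_apply_eq_smul] using
      sub_smul_mem_span_range_sub_vecMulVec (vecMulVec α β) w v i
  obtain ⟨i₀, hi₀⟩ : ∃ i, α i ≠ 0 := Function.ne_iff.mp hα
  refine ⟨(α i₀)⁻¹ * w i₀, fun i => by_contra fun hne => hv ?_⟩
  have hvL : v ∈ L := by
    refine (smul_mem_iff L (sub_ne_zero.mpr hne)).mp ?_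
    convert sub_mem (smul_mem L (α i * (α i₀)⁻¹) (hrow i₀)) (hrow i) using 1
    simp only [smul_sub, smul_smul, sub_smul, mul_assoc, inv_mul_cancel₀ hi₀, mul_one]
    abel
  have hβL : β ∈ L := by
    refine (smul_mem_iff L hi₀).mp ?_
    simpa using add_mem (hrow i₀) (smul_mem L (w i₀) hvL)
  rwa [← eq_span_singleton_of_finrank_le_one h hβL hβ]

lemma mrank'_fromCols_add_ncard_le [Fintype ι] [Fintype κ] [Fintype ν] {X : Matrix ν ι D}
    {A : Matrix ι κ D} {Y : Matrix ν κ D} {α : ν → D} {β : κ → D} {S : Set ι}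
    (hcol : ∀ i ∈ S, ∃ d, ∀ j, X j i = α j * d) (hY : Y = X * A + vecMulVec α β) :
    mrank' (fromCols X Y) + S.ncard ≤ Fintype.card ι + 1 := by
  classical
  choose d hd using hcol
  set d' : ι → D := fun i => if h : i ∈ S then d i h else 0
  set P : Matrix ι ι D := diagonal fun i => if i ∈ S then 0 else 1
  -- `P` kills the columns in `S`, which are recovered as `α d'ᵀ`; so `(X, Y)` is `X P (I, A)`,
  -- of rank at most `|ι| - |S|`, plus a matrix of rank at most one
  have hX : X = X * P + vecMulVec α d' := by
    ext j i
    by_cases hi : i ∈ S <;> simp [P, d', hi, hd, vecMulVec_apply]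
  have hXY :
      fromCols X Y = X * P * fromCols 1 A + vecMulVec α (Sum.elim d' (d' ᵥ* A + β)) := by
    calc fromCols X Y = fromCols (X * P + vecMulVec α d')
          ((X * P + vecMulVec α d') * A + vecMulVec α β) := by rw [← hX, hY]
      _ = _ := by
        ext j (i | l) <;>
          simp [Matrix.add_mul, vecMulVec_mul, vecMulVec_apply, mul_add, add_assoc]
  have hP : mrank' P ≤ S.toFinsetᶜ.card :=
    mrank'_le_card_of_forall_notMem_eq_zero _ fun i hi => by
      rw [Finset.mem_compl, Set.mem_toFinset, not_not] at hi
      ext j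
      simp [P, diagonal_apply, hi]
  calc mrank' (fromCols X Y) + S.ncard
      ≤ mrank' (X * P * fromCols 1 A) + mrank' (vecMulVec α (Sum.elim d' (d' ᵥ* A + β)))
        + S.ncard := by
        rw [hXY]; exact Nat.add_le_add_right (mrank'_add_le _ _) _
    _ ≤ S.toFinsetᶜ.card + 1 + S.toFinset.card := by
        rw [Set.ncard_eq_toFinset_card']
        gcongr
        · exact ((mrank'_mul_le_left _ _).trans (mrank'_mul_le_right _ _)).trans hP
        · exact mrank'_vecMulVec_le_one _ _
    _ = Fintype.card ι + 1 := by rw [add_right_comm, Finset.card_compl_add_card]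

end RankOne

section Perturbation

lemma Subring.exists_mem_ne_zero_ne_one (E : Subring D) (h : 2 < Cardinal.mk E) :
    ∃ s ∈ E, s ≠ 0 ∧ s ≠ 1 := by
  by_contra! hE
  have hsub : (E : Set D) ⊆ {0, 1} := fun x hx => by
    by_cases hx0 : x = 0 <;> simp [hx0, hE x hx]
  have := (Cardinal.mk_le_mk_of_subset hsub).trans Cardinal.mk_insert_le
  rw [Cardinal.mk_singleton, one_add_one_eq_two] at this
  exact h.not_ge this

lemma Subring.single_one_apply_mem [DecidableEq ι] (E : Subring D) (i j : ι) :
    (Pi.single i (1 : D) : ι → D) j ∈ E := by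
  rw [Pi.single_apply]
  split_ifs
  exacts [E.one_mem, E.zero_mem]

lemma exists_single_one_notMem [Fintype ι] [DecidableEq ι] {p : Submodule D (ι → D)}
    (hp : p ≠ ⊤) : ∃ i, Pi.single i (1 : D) ∉ p := by
  by_contra! h
  refine hp (eq_top_iff.mpr ((Pi.basisFun D ι).span_eq.ge.trans (span_le.mpr ?_)))
  rintro _ ⟨i, rfl⟩
  simpa using h i

lemma exists_forall_mem_notMem_notMem [Fintype ι] [DecidableEq ι] (E : Subring D)
    {p q : Submodule D (ι → D)} (hp : p ≠ ⊤) (hq : q ≠ ⊤) :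
    ∃ v : ι → D, (∀ j, v j ∈ E) ∧ v ∉ p ∧ v ∉ q := by
  obtain ⟨i, hi⟩ := exists_single_one_notMem hp
  obtain ⟨j, hj⟩ := exists_single_one_notMem hq
  by_cases hiq : Pi.single i (1 : D) ∈ q
  swap; · exact ⟨_, E.single_one_apply_mem i, hi, hiq⟩
  by_cases hjp : Pi.single j (1 : D) ∈ p
  swap; · exact ⟨_, E.single_one_apply_mem j, hjp, hj⟩
  refine ⟨Pi.single i 1 + Pi.single j 1,
    fun l => E.add_mem (E.single_one_apply_mem i l) (E.single_one_apply_mem j l),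
    fun h => hi ?_, fun h => hj ?_⟩
  · simpa using sub_mem h hjp
  · simpa using sub_mem h hiq

lemma ne_top_of_finrank_lt_card [Fintype κ] {p : Submodule D (κ → D)}
    (h : finrank D p < Fintype.card κ) : p ≠ ⊤ := by
  rintro rfl
  rw [finrank_top, finrank_fintype_fun_eq_card] at h
  exact h.false

/-- The column vectors `u` for which `A + u vᵀ` stays in `M_{k,r+1}(E^{m×n})` for every `v` over
`E` outside the row space of `A`. -/
def IsAdmissibleColumn [Fintype ι] (E : Subring D) (A : Matrix ι κ D) (u : ι → D) : Prop :=
  (∀ i, u i ∈ E) ∧ (∀ i, A i = 0 → u i = 0) ∧ ∃ c, c ᵥ* A = 0 ∧ c ⬝ᵥ u ≠ 0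

lemma IsAdmissibleColumn.ne_zero [Fintype ι] {E : Subring D} {A : Matrix ι κ D} {u : ι → D}
    (hu : IsAdmissibleColumn E A u) : u ≠ 0 := by
  obtain ⟨-, -, c, -, hcu⟩ := hu
  rintro rfl
  exact hcu (dotProduct_zero c)

lemma IsAdmissibleColumn.add_of_not [Fintype ι] {E : Subring D} {A : Matrix ι κ D}
    {u u₀ : ι → D} (hu₀ : IsAdmissibleColumn E A u₀) (huE : ∀ i, u i ∈ E)
    (hu : ∀ i, A i = 0 → u i = 0) (hnot : ¬IsAdmissibleColumn E A u) :
    IsAdmissibleColumn E A (u + u₀) := by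
  obtain ⟨hu₀E, hu₀, c, hc, hcu₀⟩ := hu₀
  have hcu : c ⬝ᵥ u = 0 := by_contra fun h => hnot ⟨huE, hu, c, hc, h⟩
  refine ⟨fun i => E.add_mem (huE i) (hu₀E i), fun i hi => by simp [hu i hi, hu₀ i hi], c, hc,
    ?_⟩
  rwa [dotProduct_add, hcu, zero_add]

/-- Since the `k > r` nonzero rows of `A` are linearly dependent, some left null vector of `A`
does not vanish at a nonzero row. -/
lemma exists_isAdmissibleColumn {m n k r : ℕ} {E : Subring D} {A : Matrix (Fin m) (Fin n) D}
    (hA : MemMkr E k r A) (hrk : r < k) : ∃ u, IsAdmissibleColumn E A u := by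
  classical
  obtain ⟨-, hArank, hAk⟩ := hA
  set S := Finset.univ.filter fun i => A i ≠ 0
  have hS : S.card = k := by
    rw [← hAk, ← Set.ncard_coe_finset]
    congr
    ext i
    simp [S, Function.ne_iff]
  have hdep : ¬LinearIndepOn D (fun i => A i) (S : Set (Fin m)) := fun hind => by
    have hcard : finrank D (span D (Set.range fun i : (S : Set (Fin m)) => A i)) = k := by
      rw [finrank_span_eq_card hind]
      simpa using hS
    have hle : finrank D (span D (Set.range fun i : (S : Set (Fin m)) => A i)) ≤ r :=
      hArank ▸ finrank_mono (span_mono (Set.range_comp_subset_range _ _))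
    omega
  rw [linearIndepOn_finset_iff] at hdep
  push Not at hdep
  obtain ⟨f, hf, i, hiS, hfi⟩ := hdep
  refine ⟨Pi.single i 1, E.single_one_apply_mem i, fun j hj => ?_,
    fun j => if j ∈ S then f j else 0, ?_, by simp [hiS, hfi]⟩
  · have hji : j ≠ i := by
      rintro rfl
      exact (Finset.mem_filter.mp hiS).2 hj
    simp [hji]
  · simp [vecMul_eq_sum, ite_smul, Finset.sum_ite_mem, hf]

lemma range_vecMulLinear_add_vecMulVec [Fintype ι] {A : Matrix ι κ D} {u c : ι → D}
    (hc : c ᵥ* A = 0) (hcu : c ⬝ᵥ u ≠ 0) (v : κ → D) :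
    LinearMap.range (A + vecMulVec u v).vecMulLinear =
      LinearMap.range A.vecMulLinear ⊔ span D {v} := by
  have hB (x : ι → D) : x ᵥ* (A + vecMulVec u v) = x ᵥ* A + (x ⬝ᵥ u) • v := by
    rw [vecMul_add, vecMul_vecMulVec]
  have hv : v ∈ LinearMap.range (A + vecMulVec u v).vecMulLinear :=
    ⟨(c ⬝ᵥ u)⁻¹ • c, by
      rw [vecMulLinear_apply, hB, smul_vecMul, hc, smul_zero, zero_add, smul_dotProduct,
        smul_eq_mul, inv_mul_cancel₀ hcu, one_smul]⟩
  refine le_antisymm ?_ (sup_le ?_ ((span_singleton_le_iff_mem _ _).mpr hv))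
  · rintro _ ⟨x, rfl⟩
    rw [vecMulLinear_apply, hB]
    exact add_mem (mem_sup_left ⟨x, rfl⟩)
      (mem_sup_right (smul_mem _ _ (mem_span_singleton_self v)))
  · rintro _ ⟨x, rfl⟩
    rw [vecMulLinear_apply, eq_sub_of_add_eq (hB x).symm]
    exact sub_mem ⟨x, rfl⟩ (smul_mem _ _ hv)

lemma add_vecMulVec_row_eq_zero_iff [Fintype ι] {A : Matrix ι κ D} {u : ι → D}
    (hu : ∀ i, A i = 0 → u i = 0) {v : κ → D} (hv : v ∉ LinearMap.range A.vecMulLinear)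
    (i : ι) : (A + vecMulVec u v) i = 0 ↔ A i = 0 := by
  classical
  have hrow : (A + vecMulVec u v) i = A i + u i • v := rfl
  refine ⟨fun h => by_contra fun hAi => hv ?_,
    fun h => by rw [hrow, h, hu i h, zero_smul, add_zero]⟩
  have hui : u i ≠ 0 := fun hui => hAi (by rwa [hrow, hui, zero_smul, add_zero] at h)
  rw [hrow] at h
  refine ⟨-(u i)⁻¹ • Pi.single i 1, ?_⟩
  rw [vecMulLinear_apply, smul_vecMul, single_one_vecMul, row, eq_neg_of_add_eq_zero_left h,
    neg_smul_neg, smul_smul, inv_mul_cancel₀ hui, one_smul]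

lemma memMkr_add_vecMulVec {m n k r : ℕ} {E : Subring D} {A : Matrix (Fin m) (Fin n) D}
    {u : Fin m → D} {v : Fin n → D} (hA : MemMkr E k r A) (hu : IsAdmissibleColumn E A u)
    (hvE : ∀ j, v j ∈ E) (hv : v ∉ LinearMap.range A.vecMulLinear) :
    MemMkr E k (r + 1) (A + vecMulVec u v) := by
  obtain ⟨hAE, hArank, hAk⟩ := hA
  obtain ⟨huE, hu, c, hc, hcu⟩ := hu
  refine ⟨fun i j => E.add_mem (hAE i j) (E.mul_mem (huE i) (hvE j)), ?_, ?_⟩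
  · rw [mrank'_eq_finrank_range, range_vecMulLinear_add_vecMulVec hc hcu,
      finrank_sup_span_singleton hv, ← mrank'_eq_finrank_range, hArank]
  · convert hAk using 2
    ext i
    simpa [Function.ne_iff] using (add_vecMulVec_row_eq_zero_iff hu hv i).not

end Perturbation

section Adjacency

variable {m n k r : ℕ} {E : Subring D} {A : Matrix (Fin m) (Fin n) D}
  {X : Matrix (Fin m) (Fin m) D} {Y : Matrix (Fin m) (Fin n) D}

lemma MemMkr.range_vecMulLinear_ne_top (hA : MemMkr E k r A) (hrn : r < n) :
    LinearMap.range A.vecMulLinear ≠ ⊤ :=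
  ne_top_of_finrank_lt_card (by rwa [← mrank'_eq_finrank_range, hA.2.1, Fintype.card_fin])

lemma mrank'_sub_mul_sub_vecMulVec_eq_one (hA : MemMkr E k r A)
    (hadj : ∀ B : Matrix (Fin m) (Fin n) D, MemMkr E k (r + 1) B → mrank' (B - A) = 1 →
      mrank' (fromRows (fromCols X Y) (fromCols 1 B)) = m + 1)
    {u : Fin m → D} {v : Fin n → D} (hu : IsAdmissibleColumn E A u) (hvE : ∀ j, v j ∈ E)
    (hv : v ∉ LinearMap.range A.vecMulLinear) :
    mrank' (Y - X * A - vecMulVec (X *ᵥ u) v) = 1 := by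
  have hv0 : v ≠ 0 := fun h => hv (h ▸ zero_mem _)
  have h := hadj _ (memMkr_add_vecMulVec hA hu hvE hv)
    (by rw [add_sub_cancel_left]; exact mrank'_vecMulVec hu.ne_zero hv0)
  rw [mrank'_fromRows_fromCols_one, Fintype.card_fin, Matrix.mul_add, mul_vecMulVec,
    ← sub_sub] at h
  omega

lemma mrank'_sub_mul_le_one (hEcard : 2 < Cardinal.mk E) (hrn : r < n) (hrk : r < k)
    (hA : MemMkr E k r A)
    (hadj : ∀ B : Matrix (Fin m) (Fin n) D, MemMkr E k (r + 1) B → mrank' (B - A) = 1 →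
      mrank' (fromRows (fromCols X Y) (fromCols 1 B)) = m + 1) :
    mrank' (Y - X * A) ≤ 1 := by
  obtain ⟨u, hu⟩ := exists_isAdmissibleColumn hA hrk
  obtain ⟨s, hsE, hs0, hs1⟩ := E.exists_mem_ne_zero_ne_one hEcard
  obtain ⟨j, hj⟩ := exists_single_one_notMem (hA.range_vecMulLinear_ne_top hrn)
  have key := fun v hvE hv => (mrank'_sub_mul_sub_vecMulVec_eq_one hA hadj hu (v := v) hvE hv).le
  exact mrank'_le_one_of_mrank'_sub_vecMulVec_le_one hs1 (key _ (E.single_one_apply_mem j) hj)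
    (key _ (fun l => E.mul_mem hsE (E.single_one_apply_mem j l))
      ((smul_mem_iff _ hs0).not.mpr hj))

lemma exists_forall_apply_eq_mul_of_sub_mul_eq_vecMulVec (hn : 1 < n) (hrn : r < n)
    (hrk : r < k) (hA : MemMkr E k r A)
    (hadj : ∀ B : Matrix (Fin m) (Fin n) D, MemMkr E k (r + 1) B → mrank' (B - A) = 1 →
      mrank' (fromRows (fromCols X Y) (fromCols 1 B)) = m + 1)
    {α : Fin m → D} {β : Fin n → D} (hZ : Y - X * A = vecMulVec α β) (hα : α ≠ 0)
    (hβ : β ≠ 0) {i : Fin m} (hi : A i ≠ 0) : ∃ d, ∀ j, X j i = α j * d := by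
  obtain ⟨u₀, hu₀⟩ := exists_isAdmissibleColumn hA hrk
  obtain ⟨v, hvE, hvA, hvβ⟩ := exists_forall_mem_notMem_notMem E
    (hA.range_vecMulLinear_ne_top hrn) (ne_top_of_finrank_lt_card (p := span D {β})
      ((finrank_span_singleton_le_one β).trans_lt (by rwa [Fintype.card_fin])))
  have hline (u : Fin m → D) (hu : IsAdmissibleColumn E A u) :
      ∃ d, ∀ j, (X *ᵥ u) j = α j * d :=
    exists_forall_eq_mul_of_mrank'_vecMulVec_sub_le_one hα hβ hvβ
      (hZ ▸ (mrank'_sub_mul_sub_vecMulVec_eq_one hA hadj hu hvE hvA).le)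
  have hcol (j : Fin m) : (X *ᵥ Pi.single i 1) j = X j i := by simp
  by_cases hu : IsAdmissibleColumn E A (Pi.single i 1)
  · obtain ⟨d, hd⟩ := hline _ hu
    exact ⟨d, fun j => hcol j ▸ hd j⟩
  -- otherwise `e_i + u₀` is admissible, and `X e_i = X (e_i + u₀) - X u₀`
  have hsupp (j : Fin m) (hj : A j = 0) : (Pi.single i (1 : D) : Fin m → D) j = 0 := by
    have hji : j ≠ i := by rintro rfl; exact hi hj
    simp [hji]
  obtain ⟨d₁, hd₁⟩ := hline _ (hu₀.add_of_not (E.single_one_apply_mem i) hsupp hu)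
  obtain ⟨d₀, hd₀⟩ := hline _ hu₀
  refine ⟨d₁ - d₀, fun j => ?_⟩
  rw [mul_sub, ← hd₁ j, ← hd₀ j, mulVec_add, Pi.add_apply, hcol j, add_sub_cancel_right]

end Adjacency

end

theorem grassmann_adjacency_lemma_general_case_general
    {D : Type} [DivisionRing D] (E : Subring D)
    (hEcard : (2 : Cardinal) < Cardinal.mk E)
    {m n k r : ℕ} (hr : 1 ≤ r) (hkr : r < k) (hn : r < n)
    (A : Matrix (Fin m) (Fin n) D) (hA : MemMkr E k r A)
    (X : Matrix (Fin m) (Fin m) D) (Y : Matrix (Fin m) (Fin n) D)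
    (hXY : mrank' (Matrix.fromCols X Y) = m)
    (hadj : ∀ B : Matrix (Fin m) (Fin n) D, MemMkr E k (r + 1) B → mrank' (B - A) = 1 →
      mrank' (Matrix.fromRows (Matrix.fromCols X Y) (Matrix.fromCols 1 B)) = m + 1) :
    IsUnit X ∧ Y = X * A := by
  obtain ⟨α, β, hZ⟩ :=
    exists_vecMulVec_eq_of_mrank'_le_one (mrank'_sub_mul_le_one hEcard hn hkr hA hadj)
  have hY : Y = X * A := by
    rw [← sub_eq_zero, hZ]
    by_contra hZ0
    have hα : α ≠ 0 := by rintro rfl; exact hZ0 (zero_vecMulVec β)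
    have hβ : β ≠ 0 := by rintro rfl; exact hZ0 (by ext; simp [vecMulVec_apply])
    have hrank := mrank'_fromCols_add_ncard_le (S := {i | ∃ j, A i j ≠ 0})
      (fun i hi => exists_forall_apply_eq_mul_of_sub_mul_eq_vecMulVec (by omega) hn hkr hA hadj
        hZ hα hβ (Function.ne_iff.mpr hi)) (eq_add_of_sub_eq' hZ)
    rw [hXY, hA.2.2, Fintype.card_fin] at hrank
    omega
  refine ⟨isUnit_of_mrank'_eq_card (le_antisymm (mrank'_le_card X) ?_), hY⟩
  calc Fintype.card (Fin m) = mrank' (fromCols X (X * A)) := by rw [Fintype.card_fin, ← hY, hXY]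
    _ = mrank' (X * fromCols 1 A) := by rw [mul_fromCols, Matrix.mul_one]
    _ ≤ mrank' X := mrank'_mul_le_left _ _

/-- Lemma 4.2: if `(X, Y)` is a matrix representation of a point of the Grassmann space
(i.e. `rank (X, Y) = m`) and `ad((X,Y), (I,B)) = 1` (i.e. the stacked matrix has rank `m+1`)
for every `B ∈ M_{k,r+1}(E^{m×n})` adjacent to `A ∈ M_{k,r}(E^{m×n})`, then `X` is invertible
and `Y = XA`. -/
theorem grassmann_adjacency_lemma_general_case
    {D : Type} [DivisionRing D] (E : Subring D)
    (hEfield : ∀ x ∈ E, x⁻¹ ∈ E) (hEcard : (2 : Cardinal) < Cardinal.mk E)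
    {m n k r : ℕ} (hr : 1 ≤ r) (hkr : r < k) (hm : k ≤ m) (hn : r < n)
    (A : Matrix (Fin m) (Fin n) D) (hA : MemMkr E k r A)
    (X : Matrix (Fin m) (Fin m) D) (Y : Matrix (Fin m) (Fin n) D)
    (hXY : mrank' (Matrix.fromCols X Y) = m)
    (hadj : ∀ B : Matrix (Fin m) (Fin n) D, MemMkr E k (r + 1) B → mrank' (B - A) = 1 →
      mrank' (Matrix.fromRows (Matrix.fromCols X Y) (Matrix.fromCols 1 B)) = m + 1) :
    IsUnit X ∧ Y = X * A :=
  grassmann_adjacency_lemma_general_case_general E hEcard hr hkr hn A hA X Y hXY hadj
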